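/- Let n ≥ 1, let F be a real n×n matrix, H a real 1×n matrix, N a real n×1 matrix, and let (r_k)_{k≥1} be the real sequence defined by r_k = H F^{k−1} N for all k ≥ 1. Then for every m ≥ 1, the m×m Hankel matrix with (i,j) entry r_{i+j+1} (0 ≤ i, j ≤ m−1) has rank at most n. -/
import Mathlib


open Matrix

/-- If `r k = H F^(k-1) N` for `k ≥ 1`, then every `m × m`
Hankel matrix `(r (i+j+1))_{0 ≤ i,j ≤ m-1}` has rank at most `n`. -/
theorem stmt_2 {n : ℕ} (hn : 1 ≤ n) (F : Matrix (Fin n) (Fin n) ℝ)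
    (H : Matrix (Fin 1) (Fin n) ℝ) (N : Matrix (Fin n) (Fin 1) ℝ)
    (r : ℕ → ℝ) (hr : ∀ k : ℕ, 1 ≤ k → r k = (H * F ^ (k - 1) * N) 0 0) :
    ∀ m : ℕ, 1 ≤ m →
      (Matrix.of fun i j : Fin m => r ((i : ℕ) + (j : ℕ) + 1)).rank ≤ n := by
  intro m hm
  set A : Matrix (Fin m) (Fin n) ℝ := Matrix.of fun i k => (H * F ^ (i : ℕ)) 0 k
  set B : Matrix (Fin n) (Fin m) ℝ := Matrix.of fun k j => (F ^ (j : ℕ) * N) k 0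
  have key : (Matrix.of fun i j : Fin m => r ((i : ℕ) + (j : ℕ) + 1)) = A * B := by
    ext i j
    have h1 : ((i : ℕ) + (j : ℕ) + 1) - 1 = (i : ℕ) + (j : ℕ) := by omega
    have hAB : (A * B) i j = ((H * F ^ (i : ℕ)) * (F ^ (j : ℕ) * N)) 0 0 := by
      simp [A, B, Matrix.mul_apply]
    rw [Matrix.of_apply, hr _ (by omega), h1, hAB, pow_add,
      Matrix.mul_assoc, Matrix.mul_assoc, ← Matrix.mul_assoc H]
  rw [key]
  calc (A * B).rank ≤ B.rank := Matrix.rank_mul_le_right A B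
    _ ≤ Fintype.card (Fin n) := B.rank_le_card_height
    _ = n := Fintype.card_fin n
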